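/- arXiv:1106.5288 — 2 statements merged into one kernel-verified Lean document; each statement's English description precedes it below -/
import Mathlib

section
/- Let L be a group and M an infinite subgroup of L such that the virtual normalizer V_L(M) is virtually infinite cyclic. Then V_L(M) is an almost malnormal subgroup of L: for every l ∈ L not in V_L(M), the intersection V_L(M) ∩ l·V_L(M)·l⁻¹ is finite. -/
open scoped Pointwise

/-- The conjugate subgroup `g H g⁻¹`. -/
def conjSub {G : Type*} [Group G] (g : G) (H : Subgroup G) : Subgroup G :=
  H.map (MulAut.conj g).toMonoidHom

/-- A collection of subgroups is almost malnormal if all members are infinite,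
any two distinct members intersect in a finite set, and every member equals its
normalizer. -/
def AMColl {G : Type*} [Group G] (S : Set (Subgroup G)) : Prop :=
  (∀ H ∈ S, (H : Set G).Infinite) ∧
  (∀ H₁ ∈ S, ∀ H₂ ∈ S, H₁ ≠ H₂ → ((H₁ : Set G) ∩ (H₂ : Set G)).Finite) ∧
  (∀ H ∈ S, Subgroup.normalizer (H : Set G) = H)

/-- Conjugacy invariance of a collection of subgroups. -/
def ConjInv {G : Type*} [Group G] (S : Set (Subgroup G)) : Prop :=
  ∀ H ∈ S, ∀ g : G, conjSub g H ∈ S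

/-- `BlowRel 𝓚 𝓗` (written `𝓚 → 𝓗` in the paper): every member of `𝓚` is
contained in some member of `𝓗`. -/
def BlowRel {G : Type*} [Group G] (K H : Set (Subgroup G)) : Prop :=
  ∀ P ∈ K, ∃ Q ∈ H, P ≤ Q

/-- The virtual normalizer (commensurator) of a subgroup `M` of `L`:
all `g ∈ L` such that `M ∩ gMg⁻¹` has finite index in both `M` and `gMg⁻¹`. -/
def virtNormalizer {L : Type*} [Group L] (M : Subgroup L) : Subgroup L :=
  Subgroup.Commensurable.commensurator M

/-- A group is virtually infinite cyclic if it contains an element of infinite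
order whose cyclic subgroup has finite index. -/
def VirtuallyInfCyclic (G : Type*) [Group G] : Prop :=
  ∃ g : G, ¬ IsOfFinOrder g ∧ (Subgroup.zpowers g).FiniteIndex

/-
`V = V_L(M)` contains `M`, and in a virtually infinite cyclic group every infinite subgroup has
finite index (it meets the cyclic subgroup `⟨g⟩` of finite index in some `⟨gⁿ⟩`, `n ≠ 0`, and
`[⟨g⟩ : ⟨gⁿ⟩] = |n|`). Hence `M` is commensurable with `V`, so `V_L(M) = V_L(V)`. If
`V ∩ lVl⁻¹` were infinite, it would have finite index in both `V` and its isomorphic copy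
`lVl⁻¹`, making `lVl⁻¹` commensurable with `V`, i.e. `l ∈ V_L(V) = V`.
-/

open Subgroup

theorem AddSubgroup.toSubgroup_zmultiples (n : ℤ) :
    (AddSubgroup.zmultiples n).toSubgroup = zpowers (Multiplicative.ofAdd n) := by
  ext m
  rw [Multiplicative.mem_toSubgroup, AddSubgroup.mem_zmultiples_iff, mem_zpowers_iff]
  exact exists_congr fun k => Multiplicative.ofAdd.eq_symm_apply

namespace Subgroup

variable {G : Type*} [Group G]

theorem index_zpowers_ofAdd (n : ℤ) :
    (zpowers (Multiplicative.ofAdd n)).index = n.natAbs := by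
  rw [← AddSubgroup.toSubgroup_zmultiples, AddSubgroup.index_toSubgroup, Int.index_zmultiples]

theorem relIndex_zpowers_zpow {g : G} (hg : ¬IsOfFinOrder g) (n : ℤ) :
    (zpowers (g ^ n)).relIndex (zpowers g) = n.natAbs := by
  have hinj : Function.Injective (zpowersHom G g) := fun a b hab =>
    Multiplicative.toAdd.injective (injective_zpow_iff_not_isOfFinOrder.2 hg hab)
  have hmap : zpowers (g ^ n) = (zpowers (Multiplicative.ofAdd n)).map (zpowersHom G g) := by
    simp [MonoidHom.map_zpowers]
  rw [← range_zpowersHom g, ← index_comap, hmap, comap_map_eq_self_of_injective hinj,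
    index_zpowers_ofAdd]

theorem le_commensurator (H : Subgroup G) : H ≤ Commensurable.commensurator H := fun g hg => by
  rw [Commensurable.commensurator_mem_iff, conjAct_pointwise_smul_eq_self (le_normalizer hg)]

end Subgroup

theorem conjSub_eq_toConjAct_smul {G : Type*} [Group G] (g : G) (H : Subgroup G) :
    conjSub g H = ConjAct.toConjAct g • H := rfl

namespace VirtuallyInfCyclic

variable {G : Type*} [Group G]

theorem of_mulEquiv {H : Type*} [Group H] (e : G ≃* H) (hG : VirtuallyInfCyclic G) :
    VirtuallyInfCyclic H := by
  obtain ⟨g, hg, hfin⟩ := hG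
  refine ⟨e g, (e.injective.isOfFinOrder_iff (f := (e : G →* H))).not.2 hg, ?_⟩
  rw [← MonoidHom.coe_coe, ← MonoidHom.map_zpowers, finiteIndex_iff, index_map_equiv]
  exact hfin.index_ne_zero

theorem finiteIndex_of_infinite (hG : VirtuallyInfCyclic G) {H : Subgroup G}
    (hH : (H : Set G).Infinite) : H.FiniteIndex := by
  obtain ⟨g, hg, hfin⟩ := hG
  have : Infinite H := hH.to_subtype
  have : Infinite ((zpowers g).subgroupOf H) := by
    rw [← not_finite_iff_infinite]
    intro
    have : Finite H := (finite_iff_finite_and_finiteIndex _).2 ⟨‹_›, inferInstance⟩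
    exact not_finite H
  obtain ⟨⟨⟨x, hxH⟩, hxg⟩, hx1⟩ := exists_ne (1 : (zpowers g).subgroupOf H)
  obtain ⟨n, rfl⟩ := mem_zpowers_iff.1 (mem_subgroupOf.1 hxg)
  have hn : n ≠ 0 := by
    rintro rfl
    exact hx1 (by ext; simp)
  have : (zpowers (g ^ n)).FiniteIndex := by
    rw [finiteIndex_iff, ← relIndex_mul_index (zpowers_le.2 (zpow_mem_zpowers g n)),
      relIndex_zpowers_zpow hg]
    exact Nat.mul_ne_zero (Int.natAbs_ne_zero.2 hn) hfin.index_ne_zero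
  exact finiteIndex_of_le (zpowers_le.2 hxH)

end VirtuallyInfCyclic

theorem Subgroup.commensurable_of_le_of_infinite {G : Type*} [Group G] {K V : Subgroup G}
    (hV : VirtuallyInfCyclic V) (hK : (K : Set G).Infinite) (hKV : K ≤ V) :
    Commensurable K V := by
  have hKV' : (K.subgroupOf V : Set V).Infinite := by
    rw [coe_subgroupOf]
    exact hK.preimage fun x hx => ⟨⟨x, hKV hx⟩, rfl⟩
  exact ⟨(hV.finiteIndex_of_infinite hKV').index_ne_zero,
    (relIndex_eq_one.2 hKV).symm ▸ one_ne_zero⟩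

theorem stmt_5 {L : Type*} [Group L] (M : Subgroup L)
    (hM : (M : Set L).Infinite)
    (hvc : VirtuallyInfCyclic (virtNormalizer M)) :
    ∀ l : L, l ∉ virtNormalizer M →
      ((virtNormalizer M : Set L) ∩ (conjSub l (virtNormalizer M) : Set L)).Finite := by
  intro l hl
  by_contra hinf
  rw [conjSub_eq_toConjAct_smul, ← coe_inf] at hinf
  have hMV : Commensurable M (virtNormalizer M) :=
    commensurable_of_le_of_infinite hvc hM (le_commensurator M)
  have hconj : VirtuallyInfCyclic (ConjAct.toConjAct l • virtNormalizer M : Subgroup L) :=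
    hvc.of_mulEquiv (equivSMul _ _)
  have hV := commensurable_of_le_of_infinite hvc hinf inf_le_left
  have hlV := commensurable_of_le_of_infinite hconj hinf inf_le_right
  apply hl
  rw [virtNormalizer, hMV.eq, Commensurable.commensurator_mem_iff]
  exact hlV.symm.trans hV
end

section
/- Let 𝓚 and 𝓗 be almost malnormal conjugacy-invariant collections of infinite subgroups of a group G with 𝓚 → 𝓗. If 𝓚 has infinitely many G-conjugacy classes of members contained in some fixed H₀ ∈ 𝓗 up to H₀-conjugacy, then 𝓚 has infinitely many G-conjugacy classes. Equivalently, if 𝓚 has finitely many G-conjugacy classes, then for each H ∈ 𝓗 the collection of members of 𝓚 contained in H has finitely many H-conjugacy classes. -/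
open scoped Pointwise

/-! A member `P ∈ 𝓚` lying in `H ∈ 𝓗` is infinite, so if `c P c⁻¹` also lies in `H` then the
infinite group `P` lies in both `H` and `c⁻¹ H c`; almost malnormality of `𝓗` forces
`c⁻¹ H c = H`, so `c` normalizes `H` and hence belongs to `H`. Thus two members of `𝓚` inside `H`
that are conjugate in `G` are already conjugate in `H`, and one member of `𝓚` inside `H` from each
of the finitely many `G`-classes meeting `H` gives the required finite set of `H`-classes. -/

lemma Set.exists_finite_subset_image_eq {α β : Type*} (s : Set α) (f : α → β)
    (hs : (f '' s).Finite) : ∃ t ⊆ s, t.Finite ∧ f '' t = f '' s := by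
  obtain ⟨t, hts, hbij⟩ := Set.exists_subset_bijOn s f
  exact ⟨t, hts, Set.Finite.of_finite_image (hbij.image_eq ▸ hs) hbij.injOn, hbij.image_eq⟩

section conjSub

variable {G : Type*} [Group G]

lemma mem_conjSub {g x : G} {H : Subgroup G} : x ∈ conjSub g H ↔ g⁻¹ * x * g ∈ H := by
  simp only [conjSub, Subgroup.mem_map, MulEquiv.coe_toMonoidHom, MulAut.conj_apply]
  constructor
  · rintro ⟨y, hy, rfl⟩
    simpa [mul_assoc] using hy
  · exact fun h => ⟨g⁻¹ * x * g, h, by group⟩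

lemma conjSub_mul (a b : G) (H : Subgroup G) :
    conjSub (a * b) H = conjSub a (conjSub b H) := by
  ext x
  simp only [mem_conjSub, mul_inv_rev, mul_assoc]

lemma conjSub_one (H : Subgroup G) : conjSub 1 H = H := by
  ext x
  simp [mem_conjSub]

lemma conjSub_mono (g : G) {H K : Subgroup G} (h : H ≤ K) : conjSub g H ≤ conjSub g K :=
  Subgroup.map_mono h

lemma conjSub_inv_conjSub (g : G) (H : Subgroup G) : conjSub g⁻¹ (conjSub g H) = H := by
  rw [← conjSub_mul, inv_mul_cancel, conjSub_one]

lemma mem_of_conjSub_eq_of_normalizer_eq {g : G} {H : Subgroup G}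
    (hN : Subgroup.normalizer (H : Set G) = H) (hg : conjSub g H = H) : g ∈ H := by
  rw [← hN]
  exact Subgroup.mem_normalizer_iff''.2 fun x => by rw [← mem_conjSub, hg]

end conjSub

namespace AMColl

variable {G : Type*} [Group G] {S : Set (Subgroup G)}

lemma eq_of_infinite_le_of_le (hS : AMColl S) {H₁ H₂ P : Subgroup G} (h₁ : H₁ ∈ S)
    (h₂ : H₂ ∈ S) (hP : (P : Set G).Infinite) (hP₁ : P ≤ H₁) (hP₂ : P ≤ H₂) : H₁ = H₂ := by
  by_contra hne
  exact hP ((hS.2.1 H₁ h₁ H₂ h₂ hne).subset fun x hx => ⟨hP₁ hx, hP₂ hx⟩)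

lemma mem_of_conjSub_le (hS : AMColl S) (hSinv : ConjInv S) {H P : Subgroup G} {c : G}
    (hH : H ∈ S) (hP : (P : Set G).Infinite) (hPH : P ≤ H) (hc : conjSub c P ≤ H) : c ∈ H := by
  have hP' : P ≤ conjSub c⁻¹ H := conjSub_inv_conjSub c P ▸ conjSub_mono c⁻¹ hc
  have hHc : conjSub c⁻¹ H = H :=
    (hS.eq_of_infinite_le_of_le hH (hSinv H hH c⁻¹) hP hPH hP').symm
  exact inv_mem_iff.1 (mem_of_conjSub_eq_of_normalizer_eq (hS.2.2 H hH) hHc)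

end AMColl

theorem stmt_9_general {G : Type*} [Group G] {𝓚 𝓗 : Set (Subgroup G)}
    (hK : AMColl 𝓚) (hH : AMColl 𝓗) (hHinv : ConjInv 𝓗)
    (hfin : ∃ T : Set (Subgroup G), T.Finite ∧ T ⊆ 𝓚 ∧
      ∀ P ∈ 𝓚, ∃ Q ∈ T, ∃ g : G, conjSub g Q = P) :
    ∀ H ∈ 𝓗, ∃ T : Set (Subgroup G), T.Finite ∧
      (∀ Q ∈ T, Q ∈ 𝓚 ∧ Q ≤ H) ∧
      ∀ P ∈ 𝓚, P ≤ H → ∃ Q ∈ T, ∃ h ∈ H, conjSub h Q = P := by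
  obtain ⟨T₀, hT₀, -, hT₀rep⟩ := hfin
  intro H hHmem
  choose! rep hrepT g hg using hT₀rep
  have hrep_fin : (rep '' {P | P ∈ 𝓚 ∧ P ≤ H}).Finite :=
    hT₀.subset (Set.image_subset_iff.2 fun P hP => hrepT P hP.1)
  obtain ⟨T, hTS, hT, hTrep⟩ := Set.exists_finite_subset_image_eq _ rep hrep_fin
  refine ⟨T, hT, fun Q hQ => hTS hQ, fun P hPK hPH => ?_⟩
  obtain ⟨Q, hQT, hQP⟩ : rep P ∈ rep '' T := hTrep ▸ ⟨P, ⟨hPK, hPH⟩, rfl⟩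
  have hQK : Q ∈ 𝓚 := (hTS hQT).1
  have hconj : conjSub (g P * (g Q)⁻¹) Q = P :=
    calc conjSub (g P * (g Q)⁻¹) Q = conjSub (g P * (g Q)⁻¹) (conjSub (g Q) (rep Q)) := by
          rw [hg Q hQK]
      _ = conjSub (g P) (rep P) := by rw [← conjSub_mul, inv_mul_cancel_right, hQP]
      _ = P := hg P hPK
  refine ⟨Q, hQT, _, ?_, hconj⟩
  exact hH.mem_of_conjSub_le hHinv hHmem (hK.1 Q hQK) (hTS hQT).2 (by rwa [hconj])

theorem stmt_9 {G : Type*} [Group G] {𝓚 𝓗 : Set (Subgroup G)}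
    (hK : AMColl 𝓚) (hH : AMColl 𝓗) (hKinv : ConjInv 𝓚) (hHinv : ConjInv 𝓗)
    (hrel : BlowRel 𝓚 𝓗)
    (hfin : ∃ T : Set (Subgroup G), T.Finite ∧ T ⊆ 𝓚 ∧
      ∀ P ∈ 𝓚, ∃ Q ∈ T, ∃ g : G, conjSub g Q = P) :
    ∀ H ∈ 𝓗, ∃ T : Set (Subgroup G), T.Finite ∧
      (∀ Q ∈ T, Q ∈ 𝓚 ∧ Q ≤ H) ∧
      ∀ P ∈ 𝓚, P ≤ H → ∃ Q ∈ T, ∃ h ∈ H, conjSub h Q = P :=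
  stmt_9_general hK hH hHinv hfin
end
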